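/- (Backdoor adjustment identification.) Under unconfoundedness given X, consistency, and positivity given X, the average treatment effect equals the adjustment-formula ATE: E[Y1 − Y0] = E[ E[Y·1{T=1} | σ(X)] / E[1{T=1} | σ(X)] − E[Y·1{T=0} | σ(X)] / E[1{T=0} | σ(X)] ]. -/

import Mathlib

open MeasureTheory ProbabilityTheory

noncomputable section

/-- The real-valued indicator of the event `T = t` for a binary treatment `T`. -/
def indicT {Ω : Type*} (T : Ω → Bool) (t : Bool) : Ω → ℝ :=
  fun ω => if T ω = t then 1 else 0

/-- The adjustment-formula ATE of a triple (covariates `X`, binary treatment `T`, outcome `Y`):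
`E[ E[Y·1{T=1} | σ(X)] / E[1{T=1} | σ(X)] − E[Y·1{T=0} | σ(X)] / E[1{T=0} | σ(X)] ]`. -/
def adjATE {Ω β : Type*} [MeasurableSpace Ω] [MeasurableSpace β]
    (μ : Measure Ω) (X : Ω → β) (T : Ω → Bool) (Y : Ω → ℝ) : ℝ :=
  ∫ ω,
    ((μ[fun ω' => Y ω' * indicT T true ω' | MeasurableSpace.comap X inferInstance]) ω
        / (μ[indicT T true | MeasurableSpace.comap X inferInstance]) ω
      - (μ[fun ω' => Y ω' * indicT T false ω' | MeasurableSpace.comap X inferInstance]) ω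
        / (μ[indicT T false | MeasurableSpace.comap X inferInstance]) ω) ∂μ

/-- Positivity given `X`: `0 < E[1{T=1} | σ(X)] < 1` almost surely. -/
def PositivityGiven {Ω β : Type*} [MeasurableSpace Ω] [MeasurableSpace β]
    (μ : Measure Ω) (X : Ω → β) (T : Ω → Bool) : Prop :=
  ∀ᵐ ω ∂μ, 0 < (μ[indicT T true | MeasurableSpace.comap X inferInstance]) ω ∧
    (μ[indicT T true | MeasurableSpace.comap X inferInstance]) ω < 1

end

/-! Conditionally on `σ(X)`, the potential outcome `Yₜ` is independent of the event `{T = t}`,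
and on that event `Y = Yₜ`; hence `E[Y·1{T=t} | X] = E[Yₜ | X]·P(T = t | X)`. Positivity lets us
divide by the propensity, and the tower property `E[E[Yₜ | X]] = E[Yₜ]` concludes. The conditional
factorisation is proved fibrewise: under the regular conditional probability `condExpKernel`,
conditional independence becomes independence in almost every fibre, where expectations of
products factor. -/

lemma norm_indicT_le_one {Ω : Type*} (T : Ω → Bool) (b : Bool) (ω : Ω) :
    ‖indicT T b ω‖ ≤ 1 := by
  unfold indicT
  split_ifs <;> simp

lemma indicT_false_eq_one_sub {Ω : Type*} (T : Ω → Bool) :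
    indicT T false = 1 - indicT T true := by
  ext ω
  cases h : T ω <;> simp [indicT, h]

section Treatment

variable {Ω : Type*} {m mΩ : MeasurableSpace Ω} {μ : Measure Ω} {T : Ω → Bool}

lemma measurable_indicT (hT : Measurable T) (b : Bool) : Measurable (indicT T b) :=
  measurable_of_finite (fun t : Bool => if t = b then (1 : ℝ) else 0) |>.comp hT

lemma integrable_indicT [IsFiniteMeasure μ] (hT : Measurable T) (b : Bool) :
    Integrable (indicT T b) μ :=
  (integrable_const (1 : ℝ)).mono' (measurable_indicT hT b).aestronglyMeasurable
    (ae_of_all _ (norm_indicT_le_one T b))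

lemma MeasureTheory.Integrable.mul_indicT {f : Ω → ℝ} (hf : Integrable f μ) (hT : Measurable T)
    (b : Bool) : Integrable (f * indicT T b) μ :=
  hf.mul_bdd (measurable_indicT hT b).aestronglyMeasurable (ae_of_all _ (norm_indicT_le_one T b))

lemma condExp_indicT_false_ae_eq [IsFiniteMeasure μ] (hm : m ≤ mΩ) (hT : Measurable T) :
    μ[indicT T false | m] =ᵐ[μ] 1 - μ[indicT T true | m] := by
  rw [indicT_false_eq_one_sub]
  filter_upwards [condExp_sub (f := 1) (integrable_const 1) (integrable_indicT hT true) m]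
    with ω hω
  rw [hω, Pi.sub_apply, show μ[(1 : Ω → ℝ) | m] = 1 from condExp_const hm 1]
  rfl

end Treatment

namespace ProbabilityTheory

variable {Ω β β' : Type*} {m' mΩ : MeasurableSpace Ω} [StandardBorelSpace Ω]
  {hm' : m' ≤ mΩ} {μ : Measure Ω} [IsFiniteMeasure μ]

lemma ae_ae_condExpKernel_of_ae {p : Ω → Prop} (hm' : m' ≤ mΩ) (h : ∀ᵐ x ∂μ, p x) :
    ∀ᵐ ω ∂μ, ∀ᵐ x ∂condExpKernel μ m' ω, p x := by
  rw [← condExpKernel_comp_trim (μ := μ) hm'] at h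
  exact ae_of_ae_trim hm' (Measure.ae_ae_of_ae_comp h)

lemma CondIndepFun.congr_ae [MeasurableSpace β] [MeasurableSpace β'] {f f' : Ω → β}
    {g g' : Ω → β'} (h : CondIndepFun m' hm' f g μ) (hf : f =ᵐ[μ] f') (hg : g =ᵐ[μ] g') :
    CondIndepFun m' hm' f' g' μ := by
  rw [← condExpKernel_comp_trim (μ := μ) hm'] at hf hg
  exact Kernel.IndepFun.congr' h (Measure.ae_ae_of_ae_comp hf) (Measure.ae_ae_of_ae_comp hg)

lemma CondIndepFun.ae_indepFun_condExpKernel [MeasurableSpace β] [MeasurableSpace β']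
    [MeasurableSpace.CountableOrCountablyGenerated Ω (β × β')] {f : Ω → β} {g : Ω → β'}
    (h : CondIndepFun m' hm' f g μ) (hf : Measurable f) (hg : Measurable g) :
    ∀ᵐ ω ∂μ, IndepFun f g (condExpKernel μ m' ω) := by
  have h_map := (condIndepFun_iff_map_prod_eq_prod_map_map hf hg).1 h
  filter_upwards [ae_of_ae_trim hm' h_map] with ω hω
  rw [indepFun_iff_map_prod_eq_prod_map_map hf.aemeasurable hg.aemeasurable]
  simpa [Kernel.map_apply _ (hf.prodMk hg), Kernel.map_apply _ hf, Kernel.map_apply _ hg,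
    Kernel.prod_apply] using hω

theorem CondIndepFun.condExp_mul_ae_eq {f g : Ω → ℝ} (h : CondIndepFun m' hm' f g μ)
    (hf : Integrable f μ) (hg : Integrable g μ) (hfg : Integrable (f * g) μ) :
    μ[f * g | m'] =ᵐ[μ] μ[f | m'] * μ[g | m'] := by
  have h_indep := (h.congr_ae hf.1.ae_eq_mk hg.1.ae_eq_mk).ae_indepFun_condExpKernel
    hf.1.stronglyMeasurable_mk.measurable hg.1.stronglyMeasurable_mk.measurable
  filter_upwards [h_indep, ae_ae_condExpKernel_of_ae hm' hf.1.ae_eq_mk,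
    ae_ae_condExpKernel_of_ae hm' hg.1.ae_eq_mk, condExp_ae_eq_integral_condExpKernel hm' hfg,
    condExp_ae_eq_integral_condExpKernel hm' hf, condExp_ae_eq_integral_condExpKernel hm' hg]
    with ω hω hf_mk hg_mk hfg_int hf_int hg_int
  rw [Pi.mul_apply, hfg_int, hf_int, hg_int, integral_congr_ae hf_mk, integral_congr_ae hg_mk,
    integral_congr_ae (Filter.EventuallyEq.mul hf_mk hg_mk)]
  exact hω.integral_mul_eq_mul_integral hf.1.stronglyMeasurable_mk.aestronglyMeasurable
    hg.1.stronglyMeasurable_mk.aestronglyMeasurable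

lemma CondIndepFun.indicT_right {f : Ω → ℝ} {T : Ω → Bool} (h : CondIndepFun m' hm' f T μ)
    (b : Bool) : CondIndepFun m' hm' f (indicT T b) μ :=
  h.comp measurable_id (measurable_of_finite fun t : Bool => if t = b then (1 : ℝ) else 0)

lemma condExp_mul_indicT_div_ae_eq {Y Yb : Ω → ℝ} {T : Ω → Bool} {b : Bool}
    (h : CondIndepFun m' hm' Yb T μ) (hYb : Integrable Yb μ) (hT : Measurable T)
    (hcons : ∀ ω, T ω = b → Y ω = Yb ω) (hne : ∀ᵐ ω ∂μ, μ[indicT T b | m'] ω ≠ 0) :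
    (fun ω => μ[fun ω' => Y ω' * indicT T b ω' | m'] ω / μ[indicT T b | m'] ω)
      =ᵐ[μ] μ[Yb | m'] := by
  have h_event : (fun ω => Y ω * indicT T b ω) = Yb * indicT T b := by
    ext ω
    by_cases hω : T ω = b <;> simp [indicT, hω, hcons]
  rw [h_event]
  filter_upwards [(h.indicT_right b).condExp_mul_ae_eq hYb (integrable_indicT hT b)
    (hYb.mul_indicT hT b), hne] with ω h_mul h_ne
  rw [h_mul, Pi.mul_apply, mul_div_cancel_right₀ _ h_ne]

end ProbabilityTheory

lemma PositivityGiven.ae_condExp_indicT_ne_zero {Ω β : Type*} [MeasurableSpace Ω]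
    [MeasurableSpace β] {μ : Measure Ω} [IsFiniteMeasure μ] {X : Ω → β} {T : Ω → Bool}
    (hpos : PositivityGiven μ X T) (hX : Measurable X) (hT : Measurable T) (b : Bool) :
    ∀ᵐ ω ∂μ, μ[indicT T b | MeasurableSpace.comap X inferInstance] ω ≠ 0 := by
  filter_upwards [hpos, condExp_indicT_false_ae_eq hX.comap_le hT]
    with ω ⟨h_pos, h_lt_one⟩ h_false
  cases b
  · rw [h_false, Pi.sub_apply]
    exact sub_ne_zero.mpr (ne_of_lt h_lt_one).symm
  · exact h_pos.ne'

theorem statement1_general {Ω : Type*} [MeasurableSpace Ω] [StandardBorelSpace Ω]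
    {d : ℕ} (μ : Measure Ω) [IsProbabilityMeasure μ]
    (X : Ω → Fin d → ℝ) (T : Ω → Bool) (Y0 Y1 Y : Ω → ℝ)
    (hX : Measurable X) (hT : Measurable T)
    (hY0 : Integrable Y0 μ) (hY1 : Integrable Y1 μ)
    (hunconf : CondIndepFun (MeasurableSpace.comap X inferInstance) hX.comap_le
      (fun ω => (Y0 ω, Y1 ω)) T μ)
    (hpos : PositivityGiven μ X T)
    (hY : Y = fun ω => if T ω then Y1 ω else Y0 ω) :
    ∫ ω, (Y1 ω - Y0 ω) ∂μ = adjATE μ X T Y := by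
  have hY1_indep : CondIndepFun _ hX.comap_le Y1 T μ :=
    hunconf.comp measurable_snd measurable_id
  have hY0_indep : CondIndepFun _ hX.comap_le Y0 T μ :=
    hunconf.comp measurable_fst measurable_id
  have h_treated := condExp_mul_indicT_div_ae_eq (Y := Y) (b := true) hY1_indep hY1 hT
    (fun ω hω => by simp [hY, hω]) (hpos.ae_condExp_indicT_ne_zero hX hT true)
  have h_control := condExp_mul_indicT_div_ae_eq (Y := Y) (b := false) hY0_indep hY0 hT
    (fun ω hω => by simp [hY, hω]) (hpos.ae_condExp_indicT_ne_zero hX hT false)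
  calc ∫ ω, (Y1 ω - Y0 ω) ∂μ
      = ∫ ω, (μ[Y1 | MeasurableSpace.comap X inferInstance] ω
          - μ[Y0 | MeasurableSpace.comap X inferInstance] ω) ∂μ := by
        rw [integral_sub hY1 hY0, integral_sub integrable_condExp integrable_condExp,
          integral_condExp hX.comap_le, integral_condExp hX.comap_le]
    _ = adjATE μ X T Y := (integral_congr_ae (h_treated.sub h_control)).symm

/-- Backdoor adjustment identification: under unconfoundedness given `X`, consistency and
positivity given `X`, the ATE `E[Y1 − Y0]` equals the adjustment-formula ATE. -/
theorem statement1 {Ω : Type*} [MeasurableSpace Ω] [StandardBorelSpace Ω] [Nonempty Ω]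
    {d : ℕ} (μ : Measure Ω) [IsProbabilityMeasure μ]
    (X : Ω → Fin d → ℝ) (T : Ω → Bool) (Y0 Y1 Y : Ω → ℝ)
    (hX : Measurable X) (hT : Measurable T)
    (hY0 : Integrable Y0 μ) (hY1 : Integrable Y1 μ)
    (hunconf : CondIndepFun (MeasurableSpace.comap X inferInstance) hX.comap_le
      (fun ω => (Y0 ω, Y1 ω)) T μ)
    (hpos : PositivityGiven μ X T)
    (hY : Y = fun ω => if T ω then Y1 ω else Y0 ω) :
    ∫ ω, (Y1 ω - Y0 ω) ∂μ = adjATE μ X T Y :=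
  statement1_general μ X T Y0 Y1 Y hX hT hY0 hY1 hunconf hpos hY
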